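/- arXiv:1809.04535 — 3 statements merged into one kernel-verified Lean document; each statement's English description precedes it below -/
import Mathlib

section
/- Let a₁, a₃ : J → ℝ be differentiable on an open interval J with a₁(b) < a₃(b) and f(a₁(b),b) = f(a₃(b),b) = 0 for all b ∈ J, where f(a,b) = (k0 + γ a²/(1+a²))·b − a with k0, γ > 0. Then the function I(b) := ∫_{a₁(b)}^{a₃(b)} f(ξ, b) dξ is differentiable on J with derivative I'(b) = ∫_{a₁(b)}^{a₃(b)} (k0 + γ ξ²/(1+ξ²)) dξ, which is strictly positive; hence I is strictly increasing on J. -/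
/-! With `g ξ = k0 + γ * ξ ^ 2 / (1 + ξ ^ 2)`, the integrand `f ξ b = b * g ξ - ξ` is affine
in `b`, so the integral splits into `b * ∫ g - ∫ ξ` and each piece is differentiated by the
fundamental theorem of calculus and the chain rule. Leibniz's boundary terms are
`f (aᵢ b) b * aᵢ' b`, which vanish, so `I' = ∫ g > 0`. -/

open intervalIntegral

theorem hasDerivAt_integral_of_hasDerivAt_bounds {g u v : ℝ → ℝ} {u' v' b : ℝ}
    (hg : Continuous g) (hu : HasDerivAt u u' b) (hv : HasDerivAt v v' b) :
    HasDerivAt (fun c => ∫ ξ in u c..v c, g ξ) (g (v b) * v' - g (u b) * u') b := by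
  have hprim (x : ℝ) := (hg.integral_hasStrictDerivAt 0 x).hasDerivAt
  refine (((hprim (v b)).comp b hv).sub ((hprim (u b)).comp b hu)).congr_of_eventuallyEq
    (Filter.Eventually.of_forall fun c => ?_)
  exact (integral_interval_sub_left (hg.intervalIntegrable _ _) (hg.intervalIntegrable _ _)).symm

theorem hasDerivAt_integral_mul_sub {g h u v : ℝ → ℝ} {u' v' b : ℝ}
    (hg : Continuous g) (hh : Continuous h) (hu : HasDerivAt u u' b) (hv : HasDerivAt v v' b) :
    HasDerivAt (fun c => ∫ ξ in u c..v c, (c * g ξ - h ξ))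
      ((∫ ξ in u b..v b, g ξ) + (b * g (v b) - h (v b)) * v' - (b * g (u b) - h (u b)) * u')
      b := by
  have hsplit : (fun c => ∫ ξ in u c..v c, (c * g ξ - h ξ)) =
      fun c => c * (∫ ξ in u c..v c, g ξ) - ∫ ξ in u c..v c, h ξ := by
    funext c
    rw [integral_sub ((hg.intervalIntegrable _ _).const_mul c) (hh.intervalIntegrable _ _),
      integral_const_mul]
  rw [hsplit]
  refine (((hasDerivAt_id' b).mul (hasDerivAt_integral_of_hasDerivAt_bounds hg hu hv)).sub
    (hasDerivAt_integral_of_hasDerivAt_bounds hh hu hv)).congr_deriv ?_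
  ring

theorem strictMonoOn_of_hasDerivAt_pos {D : Set ℝ} (hD : Convex ℝ D) (hDo : IsOpen D)
    {f f' : ℝ → ℝ} (hf : ∀ x ∈ D, HasDerivAt f (f' x) x) (hf' : ∀ x ∈ D, 0 < f' x) :
    StrictMonoOn f D :=
  strictMonoOn_of_deriv_pos hD (fun x hx => (hf x hx).continuousAt.continuousWithinAt)
    fun x hx => by
      rw [hDo.interior_eq] at hx
      rw [(hf x hx).deriv]
      exact hf' x hx

theorem stmt_4 (k0 γ : ℝ) (hk0 : 0 < k0) (hγ : 0 < γ)
    (f : ℝ → ℝ → ℝ)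
    (hf : ∀ a b, f a b = (k0 + γ * a ^ 2 / (1 + a ^ 2)) * b - a)
    (J : Set ℝ) (hJopen : IsOpen J) (hJconn : J.OrdConnected)
    (a₁ a₃ a₁' a₃' : ℝ → ℝ)
    (hd1 : ∀ b ∈ J, HasDerivAt a₁ (a₁' b) b)
    (hd3 : ∀ b ∈ J, HasDerivAt a₃ (a₃' b) b)
    (hlt : ∀ b ∈ J, a₁ b < a₃ b)
    (hr1 : ∀ b ∈ J, f (a₁ b) b = 0)
    (hr3 : ∀ b ∈ J, f (a₃ b) b = 0)
    (I : ℝ → ℝ)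
    (hI : ∀ b, I b = ∫ ξ in (a₁ b)..(a₃ b), f ξ b) :
    (∀ b ∈ J,
      HasDerivAt I (∫ ξ in (a₁ b)..(a₃ b), k0 + γ * ξ ^ 2 / (1 + ξ ^ 2)) b ∧
      0 < ∫ ξ in (a₁ b)..(a₃ b), k0 + γ * ξ ^ 2 / (1 + ξ ^ 2)) ∧
    StrictMonoOn I J := by
  set g : ℝ → ℝ := fun ξ => k0 + γ * ξ ^ 2 / (1 + ξ ^ 2)
  have hg : Continuous g := by
    simp only [g]
    fun_prop (disch := exact fun ξ => by positivity)
  have hfg (ξ b : ℝ) : f ξ b = b * g ξ - ξ := by rw [hf]; ring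
  have hderiv : ∀ b ∈ J, HasDerivAt I (∫ ξ in a₁ b..a₃ b, g ξ) b := by
    intro b hb
    have hleibniz := hasDerivAt_integral_mul_sub hg continuous_id (hd1 b hb) (hd3 b hb)
    simp only [id_eq, ← hfg, hr1 b hb, hr3 b hb, zero_mul, add_zero, sub_zero] at hleibniz
    rwa [funext hI]
  have hpos : ∀ b ∈ J, 0 < ∫ ξ in a₁ b..a₃ b, g ξ := fun b hb =>
    intervalIntegral_pos_of_pos_on (hg.intervalIntegrable _ _)
      (fun ξ _ => by positivity) (hlt b hb)
  exact ⟨fun b hb => ⟨hderiv b hb, hpos b hb⟩,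
    strictMonoOn_of_hasDerivAt_pos hJconn.convex hJopen hderiv hpos⟩
end

section
/- Define g(a) := a·(1+a²)/(k0·(1+a²) + γ·a²) for a ≥ 0 (the b-value on the nullcline of f). If 8·k0 ≥ γ then g is monotonically increasing on [0, ∞); equivalently, g'(a) ≥ 0 for all a ≥ 0. Consequently, when 8k0 ≥ γ, for each b > 0 the equation f(a,b) = 0 has exactly one nonnegative solution a, so bistability fails. -/
/-!
With `P(s) = (k0 + γ) s² + (2 k0 - γ) s + k0`, whose discriminant is `γ (γ - 8 k0) ≤ 0`,
the numerator of `g'(a)` is `P(a²)` and that of `g b - g a` is `(b - a) (P(a b) + k0 (a - b)²)`.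
So `g` is strictly increasing on all of `ℝ`; as `g 0 = 0` and `g a ≥ a / (k0 + γ)`, it maps
`[0, ∞)` onto itself, and `f a b = 0 ↔ g a = b` gives exactly one root for each `b > 0`.
-/

noncomputable def nullcline (k0 γ a : ℝ) : ℝ :=
  a * (1 + a ^ 2) / (k0 * (1 + a ^ 2) + γ * a ^ 2)

namespace nullcline

variable {k0 γ : ℝ}

lemma denom_pos (hk0 : 0 < k0) (hγ : 0 ≤ γ) (a : ℝ) :
    0 < k0 * (1 + a ^ 2) + γ * a ^ 2 := by
  positivity

lemma quadratic_nonneg (hk0 : 0 < k0) (hγ : 0 ≤ γ) (hcond : γ ≤ 8 * k0) (s : ℝ) :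
    0 ≤ (k0 + γ) * s ^ 2 + (2 * k0 - γ) * s + k0 := by
  have hsq : 4 * (k0 + γ) * ((k0 + γ) * s ^ 2 + (2 * k0 - γ) * s + k0)
      = (2 * (k0 + γ) * s + 2 * k0 - γ) ^ 2 + γ * (8 * k0 - γ) := by ring
  have hprod : 0 ≤ 4 * (k0 + γ) * ((k0 + γ) * s ^ 2 + (2 * k0 - γ) * s + k0) := by
    rw [hsq]
    have := mul_nonneg hγ (sub_nonneg.2 hcond)
    positivity
  exact nonneg_of_mul_nonneg_right hprod (by positivity)

lemma sub_eq (hk0 : 0 < k0) (hγ : 0 ≤ γ) (a b : ℝ) :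
    nullcline k0 γ b - nullcline k0 γ a =
      (b - a) * ((k0 + γ) * (a * b) ^ 2 + (2 * k0 - γ) * (a * b) + k0 + k0 * (a - b) ^ 2) /
        ((k0 * (1 + a ^ 2) + γ * a ^ 2) * (k0 * (1 + b ^ 2) + γ * b ^ 2)) := by
  have ha := (denom_pos hk0 hγ a).ne'
  have hb := (denom_pos hk0 hγ b).ne'
  unfold nullcline
  field_simp
  ring

lemma strictMono (hk0 : 0 < k0) (hγ : 0 ≤ γ) (hcond : γ ≤ 8 * k0) :
    StrictMono (nullcline k0 γ) := by
  intro a b hab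
  rw [← sub_pos, sub_eq hk0 hγ]
  have hQ := quadratic_nonneg hk0 hγ hcond (a * b)
  have hab' : 0 < k0 * (a - b) ^ 2 := by
    have := sub_ne_zero.2 hab.ne
    positivity
  have := denom_pos hk0 hγ a
  have := denom_pos hk0 hγ b
  have := sub_pos.2 hab
  positivity

lemma hasDerivAt (hk0 : 0 < k0) (hγ : 0 ≤ γ) (a : ℝ) :
    HasDerivAt (nullcline k0 γ)
      (((k0 + γ) * (a ^ 2) ^ 2 + (2 * k0 - γ) * a ^ 2 + k0) /
        (k0 * (1 + a ^ 2) + γ * a ^ 2) ^ 2) a := by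
  have hnum : HasDerivAt (fun x : ℝ => x * (1 + x ^ 2)) (1 * (1 + a ^ 2) + a * (2 * a)) a := by
    simpa using (hasDerivAt_id' a).fun_mul ((hasDerivAt_pow 2 a).const_add 1)
  have hden : HasDerivAt (fun x : ℝ => k0 * (1 + x ^ 2) + γ * x ^ 2)
      (k0 * (2 * a) + γ * (2 * a)) a := by
    simpa using (((hasDerivAt_pow 2 a).const_add 1).const_mul k0).fun_add
      ((hasDerivAt_pow 2 a).const_mul γ)
  refine (hnum.fun_div hden (denom_pos hk0 hγ a).ne').congr_deriv ?_
  ring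

lemma continuous (hk0 : 0 < k0) (hγ : 0 ≤ γ) : Continuous (nullcline k0 γ) :=
  continuous_iff_continuousAt.2 fun a => (hasDerivAt hk0 hγ a).continuousAt

lemma div_le (hk0 : 0 < k0) (hγ : 0 ≤ γ) {a : ℝ} (ha : 0 ≤ a) :
    a / (k0 + γ) ≤ nullcline k0 γ a := by
  unfold nullcline
  rw [div_le_div_iff₀ (by positivity) (denom_pos hk0 hγ a)]
  nlinarith [mul_nonneg (mul_nonneg ha hγ) (sq_nonneg a)]

lemma eq_iff (hk0 : 0 < k0) (hγ : 0 ≤ γ) (a b : ℝ) :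
    nullcline k0 γ a = b ↔ (k0 + γ * a ^ 2 / (1 + a ^ 2)) * b - a = 0 := by
  rw [nullcline, div_eq_iff (denom_pos hk0 hγ a).ne', sub_eq_zero, eq_comm]
  field_simp

end nullcline

theorem stmt_10 (k0 γ : ℝ) (hk0 : 0 < k0) (hγ : 0 < γ) (hcond : 8 * k0 ≥ γ)
    (f : ℝ → ℝ → ℝ)
    (hf : ∀ a b, f a b = (k0 + γ * a ^ 2 / (1 + a ^ 2)) * b - a)
    (g : ℝ → ℝ)
    (hg : ∀ a, g a = a * (1 + a ^ 2) / (k0 * (1 + a ^ 2) + γ * a ^ 2)) :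
    MonotoneOn g (Set.Ici 0) ∧
    (∀ a : ℝ, 0 ≤ a → 0 ≤ deriv g a) ∧
    (∀ b : ℝ, 0 < b → ∃! a : ℝ, 0 ≤ a ∧ f a b = 0) := by
  obtain rfl : g = nullcline k0 γ := funext hg
  have hmono := nullcline.strictMono hk0 hγ.le hcond
  refine ⟨hmono.monotone.monotoneOn _, fun a _ => ?_, fun b hb => ?_⟩
  · rw [(nullcline.hasDerivAt hk0 hγ.le a).deriv]
    exact div_nonneg (nullcline.quadratic_nonneg hk0 hγ.le hcond _) (sq_nonneg _)
  · simp only [hf, ← nullcline.eq_iff hk0 hγ.le]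
    have hA : 0 ≤ (k0 + γ) * b := by positivity
    have hbA : b ≤ nullcline k0 γ ((k0 + γ) * b) := by
      simpa [mul_div_cancel_left₀ b (by positivity : k0 + γ ≠ 0)] using
        nullcline.div_le hk0 hγ.le hA
    obtain ⟨a, ha, hab⟩ := intermediate_value_Icc hA (nullcline.continuous hk0 hγ.le).continuousOn
      ⟨by simpa [nullcline] using hb.le, hbA⟩
    exact ⟨a, ⟨ha.1, hab⟩, fun y hy => hmono.injective (hy.2.trans hab.symm)⟩
end

section
/- Let a₁, a₃ : J → ℝ be differentiable with a₁ < a₃, a₁' > 0 and a₃' > 0 on an open interval J, let r > 0, and let b₀, θ₁ : I → J × (0, π) be differentiable functions of time satisfying the mass constraint π r² b₀(t) + 2 θ₁(t) r a₃(b₀(t)) + 2 r (π − θ₁(t)) a₁(b₀(t)) = M₀ for all t. Then b₀'(t) and θ₁'(t) have opposite signs (and b₀' = 0 iff θ₁' = 0); in particular, if θ₁'(t) > 0 then b₀'(t) < 0. -/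
theorem stmt_13 (J : Set ℝ) (hJopen : IsOpen J) (hJconn : J.OrdConnected)
    (a₁ a₃ a₁' a₃' : ℝ → ℝ)
    (hd1 : ∀ b ∈ J, HasDerivAt a₁ (a₁' b) b)
    (hd3 : ∀ b ∈ J, HasDerivAt a₃ (a₃' b) b)
    (hlt : ∀ b ∈ J, a₁ b < a₃ b)
    (hp1 : ∀ b ∈ J, 0 < a₁' b) (hp3 : ∀ b ∈ J, 0 < a₃' b)
    (r M₀ : ℝ) (hr : 0 < r)
    (I : Set ℝ) (hIopen : IsOpen I)
    (b₀ θ₁ db dθ : ℝ → ℝ)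
    (hbJ : ∀ t ∈ I, b₀ t ∈ J)
    (hθ : ∀ t ∈ I, θ₁ t ∈ Set.Ioo 0 Real.pi)
    (hdb : ∀ t ∈ I, HasDerivAt b₀ (db t) t)
    (hdθ : ∀ t ∈ I, HasDerivAt θ₁ (dθ t) t)
    (hmass : ∀ t ∈ I, Real.pi * r ^ 2 * b₀ t + 2 * θ₁ t * r * a₃ (b₀ t)
      + 2 * r * (Real.pi - θ₁ t) * a₁ (b₀ t) = M₀) :
    ∀ t ∈ I, (0 < dθ t → db t < 0) ∧ (dθ t < 0 → 0 < db t) ∧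
      (dθ t = 0 ↔ db t = 0) := by
  intro t ht
  have hb := hdb t ht
  have hθd := hdθ t ht
  have hbJ' := hbJ t ht
  have h1 : HasDerivAt (fun t => a₁ (b₀ t)) (a₁' (b₀ t) * db t) t :=
    (hd1 _ hbJ').comp t hb
  have h3 : HasDerivAt (fun t => a₃ (b₀ t)) (a₃' (b₀ t) * db t) t :=
    (hd3 _ hbJ').comp t hb
  have hG : HasDerivAt (fun s => Real.pi * r ^ 2 * b₀ s + 2 * θ₁ s * r * a₃ (b₀ s)
      + 2 * r * (Real.pi - θ₁ s) * a₁ (b₀ s))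
      ((Real.pi * r ^ 2 * db t
        + ((2 * dθ t * r) * a₃ (b₀ t) + (2 * θ₁ t * r) * (a₃' (b₀ t) * db t)))
        + ((2 * r * (0 - dθ t)) * a₁ (b₀ t)
          + (2 * r * (Real.pi - θ₁ t)) * (a₁' (b₀ t) * db t))) t := by
    exact ((hb.const_mul (Real.pi * r ^ 2)).add
      (((hθd.const_mul 2).mul_const r).mul h3)).add
      ((((hasDerivAt_const t Real.pi).sub hθd).const_mul (2 * r)).mul h1)
  have hEq : (fun s => Real.pi * r ^ 2 * b₀ s + 2 * θ₁ s * r * a₃ (b₀ s)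
      + 2 * r * (Real.pi - θ₁ s) * a₁ (b₀ s)) =ᶠ[nhds t] fun _ => M₀ :=
    Filter.eventuallyEq_of_mem (hIopen.mem_nhds ht) hmass
  have hzero : (Real.pi * r ^ 2 * db t
        + ((2 * dθ t * r) * a₃ (b₀ t) + (2 * θ₁ t * r) * (a₃' (b₀ t) * db t)))
        + ((2 * r * (0 - dθ t)) * a₁ (b₀ t)
          + (2 * r * (Real.pi - θ₁ t)) * (a₁' (b₀ t) * db t)) = 0 := by
    have := hG.unique ((hasDerivAt_const t M₀).congr_of_eventuallyEq hEq)
    linarith [this]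
  have hkey : db t * (Real.pi * r ^ 2 + 2 * θ₁ t * r * a₃' (b₀ t)
      + 2 * r * (Real.pi - θ₁ t) * a₁' (b₀ t))
      = - (dθ t * (2 * r * (a₃ (b₀ t) - a₁ (b₀ t)))) := by linarith [hzero]; 
  obtain ⟨hθ0, hθπ⟩ := hθ t ht
  have hπ := Real.pi_pos
  have hD : 0 < Real.pi * r ^ 2 + 2 * θ₁ t * r * a₃' (b₀ t)
      + 2 * r * (Real.pi - θ₁ t) * a₁' (b₀ t) := by
    have := hp1 _ hbJ'
    have := hp3 _ hbJ'
    have : 0 < Real.pi * r ^ 2 := by positivity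
    nlinarith [hp1 _ hbJ', hp3 _ hbJ', mul_pos hθ0 hr, mul_pos (sub_pos.mpr hθπ) hr]
  have hE : 0 < 2 * r * (a₃ (b₀ t) - a₁ (b₀ t)) := by
    have := hlt _ hbJ'
    nlinarith
  refine ⟨fun h => ?_, fun h => ?_, ⟨fun h => ?_, fun h => ?_⟩⟩
  · nlinarith
  · nlinarith
  · have h0 : db t * (Real.pi * r ^ 2 + 2 * θ₁ t * r * a₃' (b₀ t)
        + 2 * r * (Real.pi - θ₁ t) * a₁' (b₀ t)) = 0 := by rw [h] at hkey; linarith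
    rcases mul_eq_zero.mp h0 with h' | h'
    · exact h'
    · linarith
  · have h0 : dθ t * (2 * r * (a₃ (b₀ t) - a₁ (b₀ t))) = 0 := by
      rw [h] at hkey; linarith
    rcases mul_eq_zero.mp h0 with h' | h'
    · exact h'
    · linarith
end
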